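/- arXiv:2305.14276 — 6 statements merged into one kernel-verified Lean document; each statement's English description precedes it below -/
import Mathlib

section
/- Let p ≥ 7 be prime and β_r = 2cos(rπ/(2p)) for 1 ≤ r ≤ p-1. Then for every 1 ≤ r < s ≤ p-1, the set {1, β_r, β_s} is linearly independent over ℚ. -/
/-!
Let `ζ` be a primitive `4p`-th root of unity, so that `β_t = ζ ^ t + ζ⁻ᵗ`. Multiplying a
rational relation `a + b β_r + c β_s = 0` by `ζ ^ s` makes `ζ` a root of a polynomial of
degree `2s ≤ 2(p - 1) = deg Φ₄ₚ` with at most five nonzero coefficients. It is therefore a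
rational multiple of `Φ₄ₚ(X) = ∑_{k < p} (-1)ᵏ X²ᵏ`, which has `p ≥ 7` nonzero coefficients,
so the multiple is zero and so are `a`, `b`, `c`.
-/

open Real

namespace Polynomial

section Cyclotomic

variable {R : Type*} [CommRing R] [IsDomain R]

theorem cyclotomic_two_mul_prime {p : ℕ} (hp : p.Prime) (hp2 : p ≠ 2) :
    cyclotomic (2 * p) R = ∑ i ∈ Finset.range p, (-X) ^ i := by
  have : Fact p.Prime := ⟨hp⟩
  have hodd : Odd p := hp.odd_of_ne_two hp2
  have hexpand := congrArg (expand R 2) (cyclotomic_prime_mul_X_sub_one R p)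
  rw [map_mul, cyclotomic_expand_eq_cyclotomic_mul Nat.prime_two hodd.not_two_dvd_nat,
    mul_comm p 2] at hexpand
  simp only [map_sub, map_pow, expand_X, map_one] at hexpand
  have hgeom : (∑ i ∈ Finset.range p, (-X) ^ i) * (X + 1) = (X ^ p + 1 : R[X]) := by
    have h := geom_sum_mul (-X : R[X]) p
    rw [hodd.neg_pow] at h
    linear_combination -h
  refine mul_right_cancel₀ (monic_X_add_C 1).ne_zero
    (mul_left_cancel₀ (monic_X_pow_sub_C 1 hp.ne_zero).ne_zero ?_)
  simp only [C_1]
  linear_combination hexpand - cyclotomic (2 * p) R * (X + 1) * cyclotomic_prime_mul_X_sub_one R p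
    - (X ^ p - 1) * hgeom

theorem coeff_cyclotomic_four_mul_prime {p : ℕ} (hp : p.Prime) (hp2 : p ≠ 2) {k : ℕ}
    (hk : k < p) : (cyclotomic (4 * p) R).coeff (2 * k) = (-1) ^ k := by
  have hneg (i : ℕ) : (-X : R[X]) ^ i = C ((-1) ^ i) * X ^ i := by
    rw [neg_pow, C_pow, C_neg, C_1]
  rw [show 4 * p = 2 * p * 2 by ring,
    ← cyclotomic_expand_eq_cyclotomic Nat.prime_two (dvd_mul_right 2 p), coeff_expand two_pos,
    if_pos (dvd_mul_right 2 k), Nat.mul_div_cancel_left k two_pos,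
    cyclotomic_two_mul_prime hp hp2, finsetSum_coeff]
  simp_rw [hneg, coeff_C_mul_X_pow]
  simp [hk]

theorem le_card_support_cyclotomic_four_mul_prime {p : ℕ} (hp : p.Prime) (hp2 : p ≠ 2) :
    p ≤ (cyclotomic (4 * p) R).support.card :=
  Finset.le_card_of_inj_on_range (2 * ·)
    (fun _ hk => by simp [coeff_cyclotomic_four_mul_prime hp hp2 hk])
    (fun _ _ _ _ h => by omega)

end Cyclotomic

theorem natDegree_cyclotomic_four_mul_prime (R : Type*) [Ring R] [Nontrivial R] {p : ℕ}
    (hp : p.Prime) (hp2 : p ≠ 2) : (cyclotomic (4 * p) R).natDegree = 2 * (p - 1) := by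
  have hcop : Nat.Coprime 4 p :=
    Nat.Coprime.pow_left 2 ((Nat.coprime_primes Nat.prime_two hp).mpr hp2.symm)
  rw [natDegree_cyclotomic, Nat.totient_mul hcop, Nat.totient_prime hp]
  rfl

theorem eq_zero_of_monic_dvd_of_card_support_lt {R : Type*} [CommSemiring R] [NoZeroDivisors R]
    {q f : R[X]} (hq : q.Monic) (hdvd : q ∣ f) (hdeg : f.natDegree ≤ q.natDegree)
    (hcard : f.support.card < q.support.card) : f = 0 := by
  rw [eq_leadingCoeff_mul_of_monic_of_dvd_of_natDegree_le hq hdvd hdeg] at hcard ⊢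
  by_contra hf
  have hlc : f.leadingCoeff ≠ 0 := fun h => hf (by rw [h, C_0, zero_mul])
  have hsupp : (C f.leadingCoeff * q).support = q.support := by
    ext n
    simp [coeff_C_mul, hlc]
  exact (hsupp ▸ hcard).false

section Palindromic

variable {R : Type*} [CommRing R] (a b c : R) (r s : ℕ)

/-- `X ^ s * (a + b (X ^ r + X⁻ʳ) + c (X ^ s + X⁻ˢ))` for `r ≤ s`. -/
noncomputable def palindromicPoly : R[X] :=
  C a * X ^ s + C b * (X ^ (s + r) + X ^ (s - r)) + C c * (X ^ (2 * s) + 1)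

theorem coeff_palindromicPoly (n : ℕ) :
    (palindromicPoly a b c r s).coeff n =
      (if n = s then a else 0) + (if n = s + r then b else 0) + (if n = s - r then b else 0)
        + (if n = 2 * s then c else 0) + (if n = 0 then c else 0) := by
  simp only [palindromicPoly, coeff_add, coeff_C_mul, coeff_X_pow, coeff_C, mul_add, mul_ite,
    mul_one, mul_zero]
  ring

theorem natDegree_palindromicPoly_le (hrs : r ≤ s) :
    (palindromicPoly a b c r s).natDegree ≤ 2 * s := by
  unfold palindromicPoly
  compute_degree
  omega

theorem card_support_palindromicPoly_le : (palindromicPoly a b c r s).support.card ≤ 5 := by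
  classical
  refine (Finset.card_le_card (t := {s, s + r, s - r, 2 * s, 0}) ?_).trans Finset.card_le_five
  intro n hn
  contrapose! hn
  simp only [Finset.mem_insert, Finset.mem_singleton, not_or] at hn
  rw [mem_support_iff, not_not, coeff_palindromicPoly]
  simp (disch := omega) only [if_neg, add_zero]

theorem aeval_palindromicPoly {K : Type*} [Field K] [Algebra R K] {ζ : K} (hζ : ζ ≠ 0)
    (hrs : r ≤ s) :
    aeval ζ (palindromicPoly a b c r s) = ζ ^ s * (algebraMap R K a +
      algebraMap R K b * (ζ ^ r + (ζ ^ r)⁻¹) + algebraMap R K c * (ζ ^ s + (ζ ^ s)⁻¹)) := by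
  obtain ⟨t, rfl⟩ := Nat.exists_eq_add_of_le' hrs
  simp only [palindromicPoly, map_add, map_mul, map_pow, aeval_C, aeval_X, map_one,
    Nat.add_sub_cancel]
  field_simp
  ring

theorem palindromicPoly_eq_zero_iff (hr : 0 < r) (hrs : r < s) :
    palindromicPoly a b c r s = 0 ↔ a = 0 ∧ b = 0 ∧ c = 0 := by
  constructor
  · intro h
    have hcoeff (n : ℕ) := coeff_palindromicPoly a b c r s n
    simp only [h, coeff_zero] at hcoeff
    refine ⟨?_, ?_, ?_⟩
    · simpa (disch := omega) only [if_pos, if_neg, add_zero, if_true] using (hcoeff s).symm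
    · simpa (disch := omega) only [if_pos, if_neg, add_zero, zero_add, if_true]
        using (hcoeff (s + r)).symm
    · simpa (disch := omega) only [if_pos, if_neg, add_zero, zero_add, if_true]
        using (hcoeff (2 * s)).symm
  · rintro ⟨rfl, rfl, rfl⟩
    simp [palindromicPoly]

end Palindromic

end Polynomial

open Complex in
theorem ofReal_two_mul_cos (x : ℝ) :
    ((2 * Real.cos x : ℝ) : ℂ) = exp (x * I) + (exp (x * I))⁻¹ := by
  push_cast
  rw [two_cos, ← Complex.exp_neg, neg_mul]

open Complex Polynomial in
theorem eq_zero_of_add_mul_two_cos_add_mul_two_cos {p : ℕ} (hp : p.Prime) (hp5 : 5 < p)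
    {r s : ℕ} (hr : 0 < r) (hrs : r < s) (hs : s ≤ p - 1) {a b c : ℚ}
    (h : (a : ℝ) + b * (2 * Real.cos (r * π / (2 * p)))
      + c * (2 * Real.cos (s * π / (2 * p))) = 0) :
    a = 0 ∧ b = 0 ∧ c = 0 := by
  have hp2 : p ≠ 2 := by omega
  set ζ : ℂ := exp (2 * π * I / (4 * p : ℕ))
  have hζ : IsPrimitiveRoot ζ (4 * p) := isPrimitiveRoot_exp _ (by omega)
  have hβ (t : ℕ) : ((2 * Real.cos (t * π / (2 * p)) : ℝ) : ℂ) = ζ ^ t + (ζ ^ t)⁻¹ := by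
    have hpC : (p : ℂ) ≠ 0 := by exact_mod_cast hp.ne_zero
    have hζt : ζ ^ t = exp ((t * π / (2 * p) : ℝ) * I) := by
      rw [← Complex.exp_nat_mul]
      congr 1
      push_cast
      field_simp
      ring
    rw [ofReal_two_mul_cos, hζt]
  have hroot : aeval ζ (palindromicPoly a b c r s) = 0 := by
    rw [aeval_palindromicPoly a b c r s (hζ.ne_zero (by omega)) hrs.le, ← hβ, ← hβ]
    simp only [eq_ratCast]
    exact mul_eq_zero_of_right _ (by exact_mod_cast congrArg ((↑) : ℝ → ℂ) h)
  have hdvd : cyclotomic (4 * p) ℚ ∣ palindromicPoly a b c r s := by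
    rw [cyclotomic_eq_minpoly_rat hζ (by omega)]
    exact minpoly.dvd ℚ ζ hroot
  refine (palindromicPoly_eq_zero_iff a b c r s hr hrs).mp
    (eq_zero_of_monic_dvd_of_card_support_lt (cyclotomic.monic _ ℚ) hdvd ?_ ?_)
  · rw [natDegree_cyclotomic_four_mul_prime ℚ hp hp2]
    exact (natDegree_palindromicPoly_le a b c r s hrs.le).trans (by omega)
  · exact (card_support_palindromicPoly_le a b c r s).trans_lt
      (hp5.trans_le (le_card_support_cyclotomic_four_mul_prime hp hp2))

theorem stmt4 (p : ℕ) (hp : p.Prime) (hp7 : 7 ≤ p)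
    (r s : ℕ) (hr : 1 ≤ r) (hrs : r < s) (hs : s ≤ p - 1) :
    LinearIndependent ℚ
      ![(1 : ℝ), 2 * Real.cos (r * π / (2 * p)), 2 * Real.cos (s * π / (2 * p))] := by
  rw [Fintype.linearIndependent_iff]
  intro g hg i
  simp only [Fin.sum_univ_three, Matrix.cons_val_zero, Matrix.cons_val_one, Matrix.cons_val_two,
    Matrix.head_cons, Matrix.tail_cons, Rat.smul_def, mul_one] at hg
  obtain ⟨h0, h1, h2⟩ := eq_zero_of_add_mul_two_cos_add_mul_two_cos hp (by omega) hr hrs hs hg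
  fin_cases i <;> assumption
end

section
/- Let p_1, ..., p_k ≥ 5 be distinct primes and suppose n_i = p_i - 1 or n_i = 2p_i - 1 for each i. If λ_i and λ'_i are eigenvalues of P_{n_i} (numbers 2cos(rπ/(n_i+1)) with 1 ≤ r ≤ n_i) for each i, and λ_1 + ... + λ_k = λ'_1 + ... + λ'_k, then λ_i = λ'_i for all i. In particular the cartesian product P_{n_1} □ ... □ P_{n_k} has simple eigenvalues. -/
/-!
Put `m i = n i + 1 ∈ {p i, 2 p i}`. All numbers `2 cos (r π / m i)` lie in the cyclotomic field
of level `N = 4 ∏ p i`, so the automorphisms `ζ ↦ ζ ^ t`, `t` coprime to `N`, show that the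
relation `∑ 2 cos (r i π / m i) = ∑ 2 cos (r' i π / m i)` survives replacing every `r` by `t r`.
Fix `i` and take `t ≡ 1 (mod N / p i)`: such `t` fix every other term, so the difference `d` of
the `i`-th terms is unchanged by the `p i - 1` admissible residues of `t` mod `p i`. Summing over
all `p i` residues gives `0`, hence `(p i - 1) d` is minus the value at the residue `0`, an
integer of absolute value at most `4`. Since `d` is an algebraic integer, `d ∈ ℤ`, so `d = 0` as
soon as `p i ≥ 7`; the differences add up to `0` and at most one `p i` equals `5`, so that last
difference vanishes too.
-/

open Real Polynomial Finset

theorem sum_range_cos_add_mul_eq_zero {θ δ : ℝ} {n : ℕ} (hn : ∃ k : ℤ, n * δ = k * (2 * π))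
    (hδ : ∀ k : ℤ, δ ≠ k * (2 * π)) : ∑ s ∈ range n, cos (θ + s * δ) = 0 := by
  set w := Complex.exp (δ * Complex.I)
  have hw : w ^ n = 1 := by
    obtain ⟨k, hk⟩ := hn
    rw [← Complex.exp_nat_mul, ← mul_assoc, ← Complex.ofReal_natCast, ← Complex.ofReal_mul, hk]
    push_cast
    rw [mul_assoc]
    exact Complex.exp_int_mul_two_pi_mul_I k
  have hw1 : w ≠ 1 := by
    intro h
    obtain ⟨k, hk⟩ := Complex.exp_eq_one_iff.mp h
    refine hδ k (Complex.ofReal_injective ?_)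
    push_cast
    exact mul_right_cancel₀ Complex.I_ne_zero (hk.trans (by ring))
  have hsum : ∑ s ∈ range n, Complex.exp ((θ + s * δ : ℝ) * Complex.I) = 0 := by
    have hterm : ∀ s : ℕ, Complex.exp ((θ + s * δ : ℝ) * Complex.I)
        = Complex.exp (θ * Complex.I) * w ^ s := fun s => by
      rw [← Complex.exp_nat_mul, ← Complex.exp_add]
      push_cast
      ring_nf
    simp only [hterm, ← mul_sum, geom_sum_eq hw1, hw, sub_self, zero_div, mul_zero]
  simpa only [Complex.re_sum, Complex.exp_ofReal_mul_I_re, Complex.zero_re] using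
    congrArg Complex.re hsum

theorem cos_mul_mul_pi_div_eq_of_modEq {m t t' : ℕ} (h : t ≡ t' [MOD 2 * m]) (r : ℕ) :
    cos (t * r * π / m) = cos (t' * r * π / m) := by
  rcases eq_or_ne m 0 with rfl | hm
  · simp
  obtain ⟨c, hc⟩ := Nat.modEq_iff_dvd.mp h
  have : (t' * r * π / m : ℝ) = t * r * π / m + (c * r : ℤ) * (2 * π) := by
    have hc' : (t' : ℝ) = t + 2 * m * c := by
      have := congrArg (Int.cast : ℤ → ℝ) hc
      push_cast at this
      linarith
    rw [hc']
    push_cast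
    field_simp
  rw [this, cos_add_int_mul_two_pi]

theorem exists_int_two_cos_nat_mul_pi_div_two (k : ℕ) : ∃ z : ℤ, 2 * cos (k * π / 2) = z := by
  obtain ⟨j, rfl | rfl⟩ := Nat.even_or_odd' k
  · refine ⟨2 * (-1) ^ j, ?_⟩
    push_cast
    rw [← cos_nat_mul_pi j]
    ring_nf
  · refine ⟨0, ?_⟩
    rw [Int.cast_zero, mul_eq_zero, cos_eq_zero_iff]
    exact Or.inr ⟨j, by push_cast; ring⟩

theorem exists_int_two_cos_of_dvd_two_mul {m t : ℕ} (h : m ∣ 2 * t) (r : ℕ) :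
    ∃ z : ℤ, 2 * cos (t * r * π / m) = z := by
  rcases eq_or_ne m 0 with rfl | hm
  · exact ⟨2, by simp⟩
  obtain ⟨c, hc⟩ := h
  obtain ⟨z, hz⟩ := exists_int_two_cos_nat_mul_pi_div_two (c * r)
  refine ⟨z, ?_⟩
  have hc' : (2 * t : ℝ) = m * c := by exact_mod_cast hc
  rw [← hz]
  congr 2
  rw [div_eq_div_iff (by positivity) two_ne_zero]
  push_cast
  linear_combination (r * π) * hc'

theorem IsPrimitiveRoot.aeval_pow_eq_zero_of_coprime {K : Type*} [CommRing K] [IsDomain K]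
    [CharZero K] {μ : K} {n : ℕ} (h : IsPrimitiveRoot μ n) (hn : 0 < n) {P : ℤ[X]}
    (hP : aeval μ P = 0) {t : ℕ} (ht : t.Coprime n) : aeval (μ ^ t) P = 0 := by
  obtain ⟨Q, rfl⟩ := minpoly.isIntegrallyClosed_dvd (h.isIntegral hn) hP
  rw [map_mul, h.minpoly_eq_pow_coprime ht, minpoly.aeval, zero_mul]

theorem aeval_exp_pow_eq_two_cos {N m : ℕ} (hN : 0 < N) (hm : 2 * m ∣ N) (u a : ℕ) :
    aeval (Complex.exp (2 * π * Complex.I / N) ^ u)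
      (X ^ (a * (N / (2 * m))) + X ^ ((N - 1) * (a * (N / (2 * m)))) : ℤ[X]) =
      ((2 * cos (u * a * π / m) : ℝ) : ℂ) := by
  obtain ⟨c, rfl⟩ := hm
  have hm0 : m ≠ 0 := by rintro rfl; simp at hN
  have hc0 : c ≠ 0 := by rintro rfl; simp at hN
  have hc : 2 * m * c / (2 * m) = c := Nat.mul_div_cancel_left c (by positivity)
  set z := Complex.exp (2 * π * Complex.I / (2 * m * c : ℕ)) ^ u
  set x : ℝ := u * a * π / m
  have hz : z ^ (a * c) = Complex.exp (x * Complex.I) := by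
    rw [← pow_mul, ← Complex.exp_nat_mul]
    congr 1
    have : (m : ℂ) ≠ 0 := by exact_mod_cast hm0
    have : (c : ℂ) ≠ 0 := by exact_mod_cast hc0
    simp only [x]
    push_cast
    field_simp
  have hzN : z ^ (2 * m * c) = 1 := by
    rw [← pow_mul, mul_comm u, pow_mul, (Complex.isPrimitiveRoot_exp _ hN.ne').pow_eq_one, one_pow]
  have hinv : z ^ ((2 * m * c - 1) * (a * c)) = Complex.exp (-x * Complex.I) := by
    rw [neg_mul, Complex.exp_neg, ← hz]
    refine eq_inv_of_mul_eq_one_left ?_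
    rw [← pow_add, ← add_one_mul, Nat.sub_one_add_one hN.ne', pow_mul, hzN, one_pow]
  simp only [hc, map_add, map_pow, aeval_X, hz, hinv]
  push_cast
  exact (Complex.two_cos _).symm

theorem sum_two_cos_mul_eq_of_coprime {ι : Type*} [Fintype ι] {N : ℕ} (hN : 0 < N)
    {m r r' : ι → ℕ} (hm : ∀ j, 2 * m j ∣ N)
    (h : ∑ j, 2 * cos (r j * π / m j) = ∑ j, 2 * cos (r' j * π / m j))
    {t : ℕ} (ht : t.Coprime N) :
    ∑ j, 2 * cos (t * r j * π / m j) = ∑ j, 2 * cos (t * r' j * π / m j) := by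
  let e : (ι → ℕ) → ι → ℕ := fun a j => a j * (N / (2 * m j))
  -- at `N`-th roots of unity, `X ^ ((N - 1) * e)` takes the value of `X ^ (-e)`
  let P : ℤ[X] := ∑ j, (X ^ e r j + X ^ ((N - 1) * e r j) - (X ^ e r' j + X ^ ((N - 1) * e r' j)))
  have hP : ∀ u : ℕ, aeval (Complex.exp (2 * π * Complex.I / N) ^ u) P =
      ((∑ j, 2 * cos (u * r j * π / m j) - ∑ j, 2 * cos (u * r' j * π / m j) : ℝ) : ℂ) := by
    intro u
    simp only [P, e, map_sum, map_sub, aeval_exp_pow_eq_two_cos hN (hm _)]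
    push_cast
    rw [sum_sub_distrib]
  have hP1 := hP 1
  simp only [pow_one, Nat.cast_one, one_mul, h, sub_self, Complex.ofReal_zero] at hP1
  have := (Complex.isPrimitiveRoot_exp N hN.ne').aeval_pow_eq_zero_of_coprime hN hP1 ht
  rw [hP t] at this
  exact sub_eq_zero.mp (by exact_mod_cast this)

theorem sum_range_two_cos_mul_eq_zero {p m T ρ : ℕ} (hp : p.Prime) (hm : m = p ∨ m = 2 * p)
    (hT : 4 ∣ T) (hpT : ¬ p ∣ T) (hρ : 0 < ρ) (hρm : ρ < m) :
    ∑ s ∈ range p, 2 * cos ((1 + s * T : ℕ) * ρ * π / m) = 0 := by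
  obtain ⟨u, rfl⟩ := hT
  have hm0 : (m : ℝ) ≠ 0 := by rcases hm with rfl | rfl <;> simp [hp.ne_zero]
  by_cases hpρ : p ∣ ρ
  · obtain ⟨e, rfl⟩ := hpρ
    have he : e = 1 ∧ m = 2 * p := by
      have := hp.two_le
      rcases hm with rfl | rfl
      · exact absurd hρm (not_lt.mpr (Nat.le_mul_of_pos_right _ (Nat.pos_of_mul_pos_left hρ)))
      · have : e < 2 := by nlinarith
        interval_cases e <;> simp_all
    obtain ⟨rfl, rfl⟩ := he
    refine sum_eq_zero fun s _ => mul_eq_zero_of_right _ (cos_eq_zero_iff.mpr ⟨2 * s * u, ?_⟩)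
    have : (p : ℝ) ≠ 0 := by exact_mod_cast hp.ne_zero
    push_cast
    field_simp
    ring
  · set δ : ℝ := (4 * u) * ρ * π / m
    have hterm : ∀ s : ℕ, ((1 + s * (4 * u) : ℕ) : ℝ) * ρ * π / m = ρ * π / m + s * δ := by
      intro s
      simp only [δ]
      push_cast
      ring
    simp only [hterm, ← mul_sum]
    refine mul_eq_zero_of_right _ (sum_range_cos_add_mul_eq_zero ?_ ?_)
    · have : (p : ℝ) ≠ 0 := by exact_mod_cast hp.ne_zero
      rcases hm with rfl | rfl
      · exact ⟨2 * u * ρ, by simp only [δ]; push_cast; field_simp; ring⟩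
      · exact ⟨u * ρ, by simp only [δ]; push_cast; field_simp; ring⟩
    · intro k hk
      have hkZ : ((4 * u * ρ : ℕ) : ℤ) = 2 * k * m := by
        have : (4 * u * ρ : ℝ) = 2 * k * m := by
          simp only [δ] at hk
          field_simp at hk
          linear_combination hk
        exact_mod_cast this
      have hpm : (p : ℤ) ∣ m := by rcases hm with rfl | rfl <;> simp
      have : p ∣ 4 * u * ρ := by
        exact_mod_cast hkZ ▸ (hpm.mul_left (2 * k))
      rcases (Nat.Prime.dvd_mul hp).mp this with h | h
      · exact hpT h
      · exact hpρ h

theorem sum_two_cos_mul_eq_add_sum_erase {ι : Type*} [Fintype ι] [DecidableEq ι] {m : ι → ℕ}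
    {i : ι} {t : ℕ} (ht : ∀ j ≠ i, t ≡ 1 [MOD 2 * m j]) (a : ι → ℕ) :
    ∑ j, 2 * cos (t * a j * π / m j) =
      2 * cos (t * a i * π / m i) + ∑ j ∈ univ.erase i, 2 * cos (a j * π / m j) := by
  rw [← add_sum_erase _ _ (mem_univ i)]
  congr 1
  refine sum_congr rfl fun j hj => ?_
  rw [cos_mul_mul_pi_div_eq_of_modEq (ht j (ne_of_mem_erase hj)), Nat.cast_one, one_mul]

theorem two_cos_mul_sub_two_cos_mul_eq {ι : Type*} [Fintype ι] {N : ℕ} (hN : 0 < N)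
    {m r r' : ι → ℕ} (hm : ∀ j, 2 * m j ∣ N)
    (hsum : ∑ j, 2 * cos (r j * π / m j) = ∑ j, 2 * cos (r' j * π / m j))
    {i : ι} {t : ℕ} (ht : t.Coprime N) (hti : ∀ j ≠ i, t ≡ 1 [MOD 2 * m j]) :
    2 * cos (t * r i * π / m i) - 2 * cos (t * r' i * π / m i) =
      2 * cos (r i * π / m i) - 2 * cos (r' i * π / m i) := by
  classical
  have h := sum_two_cos_mul_eq_of_coprime hN hm hsum ht
  rw [sum_two_cos_mul_eq_add_sum_erase hti r, sum_two_cos_mul_eq_add_sum_erase hti r'] at h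
  rw [← add_sum_erase _ _ (mem_univ i), ← add_sum_erase _ _ (mem_univ i)] at hsum
  linarith

theorem coprime_one_add_mul_of_modEq {p Q T s : ℕ} (hp : p.Prime) (hQT : Q ∣ T)
    (hTp : T ≡ 1 [MOD p]) (hs : s + 1 < p) : (1 + s * T).Coprime (Q * p) := by
  obtain ⟨c, rfl⟩ := hQT
  have hQ : (1 + s * (Q * c)).Coprime Q := by
    rw [show 1 + s * (Q * c) = 1 + s * c * Q by ring, Nat.coprime_add_mul_right_left]
    exact Nat.coprime_one_left Q
  refine hQ.mul_right (hp.coprime_iff_not_dvd.mpr fun hdvd => ?_).symm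
  have hmod : 1 + s * (Q * c) ≡ 1 + s [MOD p] := by
    simpa using (Nat.ModEq.mul_left s hTp).add_left 1
  have := Nat.le_of_dvd (by omega) ((hmod.dvd_iff dvd_rfl).mp hdvd)
  omega

theorem exists_int_eq_two_cos_sub_two_cos {a b m q : ℕ} (hq : q ≠ 0) {w : ℤ}
    (h : q * (2 * cos (a * π / m) - 2 * cos (b * π / m)) = w) :
    ∃ z : ℤ, 2 * cos (a * π / m) - 2 * cos (b * π / m) = z := by
  have hint : IsIntegral ℤ (2 * cos (a * π / m) - 2 * cos (b * π / m)) := by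
    have hrat : ∀ c : ℕ, (c * π / m : ℝ) = ((c / m : ℚ) : ℝ) * π := fun c => by
      push_cast
      ring
    rw [hrat a, hrat b]
    exact (isIntegral_two_mul_cos_rat_mul_pi _).sub (isIntegral_two_mul_cos_rat_mul_pi _)
  refine hint.exists_int_iff_exists_rat.mp ⟨w / q, ?_⟩
  push_cast
  rw [← h]
  field_simp

theorem two_mul_dvd_four_mul {m p : ℕ} (hm : m = p ∨ m = 2 * p) : 2 * m ∣ 4 * p := by
  rcases hm with rfl | rfl
  exacts [⟨2, by ring⟩, ⟨1, by ring⟩]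

theorem exists_int_two_cos_sub_two_cos_eq_of_not_dvd {ι : Type*} [Fintype ι] {m r r' : ι → ℕ}
    {i : ι} {p Q : ℕ} (hp : p.Prime) (hm : m i = p ∨ m i = 2 * p) (hr : 0 < r i ∧ r i < m i)
    (hr' : 0 < r' i ∧ r' i < m i) (hQ : ∀ j ≠ i, 2 * m j ∣ Q) (hQ4 : 4 ∣ Q) (hpQ : ¬ p ∣ Q)
    (hsum : ∑ j, 2 * cos (r j * π / m j) = ∑ j, 2 * cos (r' j * π / m j)) :
    ∃ z : ℤ, 2 * cos (r i * π / m i) - 2 * cos (r' i * π / m i) = z ∧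
      ((p : ℤ) - 1) * |z| ≤ 4 := by
  obtain ⟨T, hTQ, hTp⟩ := Nat.chineseRemainder ((hp.coprime_iff_not_dvd.mpr hpQ).symm) 0 1
  have hQT : Q ∣ T := Nat.modEq_zero_iff_dvd.mp hTQ
  have hN : ∀ j, 2 * m j ∣ Q * p := fun j => by
    rcases eq_or_ne j i with rfl | hj
    · exact (two_mul_dvd_four_mul hm).trans (mul_dvd_mul_right hQ4 p)
    · exact dvd_mul_of_dvd_left (hQ j hj) p
  have hNpos : 0 < Q * p := Nat.mul_pos (Nat.pos_of_ne_zero fun h => hpQ (h ▸ dvd_zero p)) hp.pos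
  set f : ℕ → ℝ := fun t => 2 * cos (t * r i * π / m i) - 2 * cos (t * r' i * π / m i)
  have hconst : ∀ s ∈ range (p - 1), f (1 + s * T) = f 1 := fun s hs => by
    simp only [f, Nat.cast_one, one_mul]
    refine two_cos_mul_sub_two_cos_mul_eq hNpos hN hsum
      (coprime_one_add_mul_of_modEq hp hQT hTp (by rw [mem_range] at hs; omega)) fun j hj => ?_
    exact (Nat.modEq_zero_iff_dvd.mpr (((hQ j hj).trans hQT).mul_left s)).add_left 1
  have htrace : ∑ s ∈ range p, f (1 + s * T) = 0 := by
    have hpT : ¬ p ∣ T := fun h => hp.one_lt.ne' (Nat.dvd_one.mp ((hTp.dvd_iff dvd_rfl).mp h))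
    have h4T := hQ4.trans hQT
    simp only [f, sum_sub_distrib, sum_range_two_cos_mul_eq_zero hp hm h4T hpT hr.1 hr.2,
      sum_range_two_cos_mul_eq_zero hp hm h4T hpT hr'.1 hr'.2, sub_zero]
  -- the one `1 + s * T` with `s < p` that is divisible by `p`
  set t₀ := 1 + (p - 1) * T
  have hpt₀ : p ∣ t₀ := by
    have hmod : t₀ ≡ 1 + (p - 1) [MOD p] := by
      simpa using (Nat.ModEq.mul_left (p - 1) hTp).add_left 1
    exact (hmod.dvd_iff dvd_rfl).mpr (by rw [Nat.add_sub_cancel' hp.one_le])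
  have hmt₀ : m i ∣ 2 * t₀ := by
    rcases hm with h | h <;> rw [h]
    exacts [dvd_mul_of_dvd_right hpt₀ 2, mul_dvd_mul_left 2 hpt₀]
  obtain ⟨z₁, hz₁⟩ := exists_int_two_cos_of_dvd_two_mul hmt₀ (r i)
  obtain ⟨z₂, hz₂⟩ := exists_int_two_cos_of_dvd_two_mul hmt₀ (r' i)
  have hkey : ((p - 1 : ℕ) : ℝ) * f 1 = ((z₂ - z₁ : ℤ) : ℝ) := by
    have h := sum_range_succ (fun s => f (1 + s * T)) (p - 1)
    rw [Nat.sub_add_cancel hp.one_le, htrace, sum_congr rfl hconst, sum_const, card_range,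
      nsmul_eq_mul] at h
    simp only [f, Int.cast_sub] at h ⊢
    linarith
  simp only [f, Nat.cast_one, one_mul] at hkey
  obtain ⟨z, hz⟩ :=
    exists_int_eq_two_cos_sub_two_cos (q := p - 1) (by have := hp.two_le; omega) hkey
  refine ⟨z, hz, ?_⟩
  have hbound : ((p - 1 : ℕ) : ℝ) * |(z : ℝ)| ≤ 4 := by
    rw [← hz, ← Nat.abs_cast, ← abs_mul, hkey, Int.cast_sub, ← hz₁, ← hz₂, abs_le]
    constructor <;> linarith [neg_one_le_cos (t₀ * r i * π / m i), cos_le_one (t₀ * r i * π / m i),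
      neg_one_le_cos (t₀ * r' i * π / m i), cos_le_one (t₀ * r' i * π / m i)]
  rw [Nat.cast_pred hp.pos] at hbound
  exact_mod_cast hbound

theorem exists_int_two_cos_sub_two_cos_eq_of_prime {ι : Type*} [Fintype ι] {p m r r' : ι → ℕ}
    (hp : ∀ j, (p j).Prime) (hinj : Function.Injective p) (hm : ∀ j, m j = p j ∨ m j = 2 * p j)
    {i : ι} (hi : p i ≠ 2) (hr : 0 < r i ∧ r i < m i) (hr' : 0 < r' i ∧ r' i < m i)
    (hsum : ∑ j, 2 * cos (r j * π / m j) = ∑ j, 2 * cos (r' j * π / m j)) :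
    ∃ z : ℤ, 2 * cos (r i * π / m i) - 2 * cos (r' i * π / m i) = z ∧
      ((p i : ℤ) - 1) * |z| ≤ 4 := by
  classical
  refine exists_int_two_cos_sub_two_cos_eq_of_not_dvd (hp i) (hm i) hr hr'
    (Q := 4 * ∏ j ∈ univ.erase i, p j)
    (fun j hj => ?_) (dvd_mul_right 4 _) (fun hdvd => ?_) hsum
  · exact (two_mul_dvd_four_mul (hm j)).trans
      (mul_dvd_mul_left 4 (dvd_prod_of_mem p (mem_erase.mpr ⟨hj, mem_univ j⟩)))
  · rcases (hp i).dvd_mul.mp hdvd with h4 | hprod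
    · exact hi ((Nat.prime_dvd_prime_iff_eq (hp i) Nat.prime_two).mp
        ((hp i).dvd_of_dvd_pow (n := 2) h4))
    · obtain ⟨j, hj, hij⟩ := ((hp i).prime.dvd_finsetProd_iff _).mp hprod
      exact (ne_of_mem_erase hj) (hinj ((Nat.prime_dvd_prime_iff_eq (hp i) (hp j)).mp hij)).symm

theorem eq_zero_of_sub_one_mul_abs_le_four {p : ℕ} (hp : p.Prime) (h5 : 5 < p) {z : ℤ}
    (h : ((p : ℤ) - 1) * |z| ≤ 4) : z = 0 := by
  have h7 : (7 : ℤ) ≤ p := by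
    have h6 : p ≠ 6 := by rintro rfl; norm_num at hp
    exact_mod_cast (show 7 ≤ p by omega)
  rw [← abs_eq_zero]
  nlinarith [abs_nonneg z]

theorem stmt6_general (k : ℕ) (p : Fin k → ℕ)
    (hp : ∀ i, (p i).Prime) (hp5 : ∀ i, 5 ≤ p i)
    (hdist : Function.Injective p)
    (n : Fin k → ℕ) (hn : ∀ i, n i = p i - 1 ∨ n i = 2 * p i - 1)
    (r r' : Fin k → ℕ)
    (hr : ∀ i, 1 ≤ r i ∧ r i ≤ n i) (hr' : ∀ i, 1 ≤ r' i ∧ r' i ≤ n i)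
    (hsum : ∑ i, 2 * Real.cos (r i * π / (n i + 1)) =
            ∑ i, 2 * Real.cos (r' i * π / (n i + 1))) :
    ∀ i, 2 * Real.cos (r i * π / (n i + 1)) = 2 * Real.cos (r' i * π / (n i + 1)) := by
  have hcast : ∀ i, (n i : ℝ) + 1 = (n i + 1 : ℕ) := fun i => by push_cast; rfl
  simp only [hcast] at hsum ⊢
  have hm : ∀ i, n i + 1 = p i ∨ n i + 1 = 2 * p i := fun i => by
    have := hp5 i
    have := hn i
    omega
  choose z hz hzp using fun i => exists_int_two_cos_sub_two_cos_eq_of_prime hp hdist hm (i := i)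
    (by have := hp5 i; omega) (by have := hr i; omega) (by have := hr' i; omega) hsum
  have hz0 : ∀ i, p i ≠ 5 → z i = 0 := fun i hi5 =>
    eq_zero_of_sub_one_mul_abs_le_four (hp i) ((hp5 i).lt_of_ne' hi5) (hzp i)
  have hzsum : ∑ i, z i = 0 := by
    have : ((∑ i, z i : ℤ) : ℝ) = 0 := by
      push_cast
      simp only [← hz, sum_sub_distrib, hsum, sub_self]
    exact_mod_cast this
  intro i
  rw [← sub_eq_zero, hz i, Int.cast_eq_zero]
  by_cases h5 : p i = 5
  · refine (sum_eq_single i (fun j _ hji => hz0 j fun hj => hji (hdist (hj.trans h5.symm)))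
      (by simp)).symm.trans hzsum
  · exact hz0 i h5

theorem stmt6 (k : ℕ) (hk : 1 ≤ k) (p : Fin k → ℕ)
    (hp : ∀ i, (p i).Prime) (hp5 : ∀ i, 5 ≤ p i)
    (hdist : Function.Injective p)
    (n : Fin k → ℕ) (hn : ∀ i, n i = p i - 1 ∨ n i = 2 * p i - 1)
    (r r' : Fin k → ℕ)
    (hr : ∀ i, 1 ≤ r i ∧ r i ≤ n i) (hr' : ∀ i, 1 ≤ r' i ∧ r' i ≤ n i)
    (hsum : ∑ i, 2 * Real.cos (r i * π / (n i + 1)) =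
            ∑ i, 2 * Real.cos (r' i * π / (n i + 1))) :
    ∀ i, 2 * Real.cos (r i * π / (n i + 1)) = 2 * Real.cos (r' i * π / (n i + 1)) :=
  stmt6_general k p hp hp5 hdist n hn r r' hr hr' hsum
end

section
/- Let ω = e^{iπ/2^e} with e ≥ 1 and let r, s ∈ {1, ..., 2^e - 1} be exactly divisible by the same power 2^d of 2, with d < e. If (ω^r + ω^{-r}) - (ω^s + ω^{-s}) is a nonzero rational number, then a contradiction follows; i.e., (ω^r + ω^{-r}) - (ω^s + ω^{-s}) is either zero or irrational. -/
/-!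
With `ζ = exp (π i / 2^e)`, a primitive `2^(e+1)`-th root of unity, `ζ^(2^e) = -1` gives
`2 cos (k π / 2^e) = ζ^k - ζ^(2^e - k)`. A rational relation
`2 cos (r π / 2^e) - 2 cos (s π / 2^e) = q` therefore makes `ζ` a root of a rational polynomial
of degree `< 2^e = φ (2^(e+1))`, which must vanish because the cyclotomic polynomial is the
minimal polynomial of `ζ`. Its constant term is `-q`.
-/

open Real Polynomial

theorem IsPrimitiveRoot.eq_zero_of_aeval_eq_zero_of_mem_degreeLT {K : Type*} [Field K]
    [CharZero K] {ζ : K} {n : ℕ} (hζ : IsPrimitiveRoot ζ n) (hn : 0 < n) {p : ℚ[X]}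
    (hp : aeval ζ p = 0) (hdeg : p ∈ degreeLT ℚ n.totient) : p = 0 := by
  by_contra hne
  have hle := minpoly.degree_le_of_ne_zero ℚ ζ hne hp
  rw [← cyclotomic_eq_minpoly_rat hζ hn, degree_cyclotomic] at hle
  exact (hle.trans_lt (mem_degreeLT.mp hdeg)).false

namespace Polynomial

variable {R : Type*} [Semiring R] {m : ℕ}

theorem X_pow_mem_degreeLT {k : ℕ} (h : k < m) : (X ^ k : R[X]) ∈ degreeLT R m :=
  mem_degreeLT.mpr <| (degree_X_pow_le k).trans_lt <| by exact_mod_cast h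

theorem C_mem_degreeLT (hm : 0 < m) (a : R) : C a ∈ degreeLT R m :=
  mem_degreeLT.mpr <| degree_C_le.trans_lt <| by exact_mod_cast hm

end Polynomial

namespace Complex

theorem isPrimitiveRoot_exp_pi_mul_I_div {m : ℕ} (hm : m ≠ 0) :
    IsPrimitiveRoot (exp (π * I / m)) (2 * m) := by
  convert isPrimitiveRoot_exp (2 * m) (by positivity) using 2
  push_cast
  field_simp

theorem exp_pi_mul_I_div_pow_sub_pow {m k : ℕ} (hm : m ≠ 0) (hk : k ≤ m) :
    exp (π * I / m) ^ k - exp (π * I / m) ^ (m - k) = 2 * cos (k * π / m) := by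
  have hpow (j : ℕ) : exp (π * I / m) ^ j = exp (j * π * I / m) := by
    rw [← exp_nat_mul, mul_div_assoc', mul_assoc]
  have hmk : ((m - k : ℕ) : ℂ) * π * I / m = π * I + -(k * π / m) * I := by
    push_cast [Nat.cast_sub hk]
    field_simp
    ring
  rw [hpow, hpow, hmk, exp_add, exp_pi_mul_I, two_cos, mul_div_right_comm]
  ring

end Complex

open Complex in
theorem stmt9_general (e : ℕ)
    (r s : ℕ) (hr : 1 ≤ r ∧ r ≤ 2 ^ e - 1) (hs : 1 ≤ s ∧ s ≤ 2 ^ e - 1)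
    (q : ℚ)
    (hq : 2 * Real.cos (r * π / 2 ^ e) - 2 * Real.cos (s * π / 2 ^ e) = q) :
    q = 0 := by
  set m := 2 ^ e with hm
  have hm0 : m ≠ 0 := by positivity
  have hrm : r < m := by omega
  have hsm : s < m := by omega
  set p : ℚ[X] := (X ^ r - X ^ (m - r)) - (X ^ s - X ^ (m - s)) - C q
  have hroot : aeval (exp (π * I / m)) p = 0 := by
    have hqC := congrArg ((↑) : ℝ → ℂ) hq
    push_cast at hqC
    simp only [p, map_sub, map_pow, aeval_X, aeval_C, eq_ratCast,
      exp_pi_mul_I_div_pow_sub_pow hm0 hrm.le, exp_pi_mul_I_div_pow_sub_pow hm0 hsm.le]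
    push_cast [m]
    rw [hqC, sub_self]
  have htotient : (2 * m).totient = m := by
    rw [hm, ← pow_succ', Nat.totient_prime_pow_succ Nat.prime_two, Nat.add_one_sub_one, mul_one]
  have hdeg : p ∈ degreeLT ℚ (2 * m).totient := by
    rw [htotient]
    refine sub_mem (sub_mem (sub_mem (X_pow_mem_degreeLT hrm) (X_pow_mem_degreeLT ?_))
      (sub_mem (X_pow_mem_degreeLT hsm) (X_pow_mem_degreeLT ?_))) (C_mem_degreeLT ?_ q) <;> omega
  have hp0 : p = 0 :=
    (isPrimitiveRoot_exp_pi_mul_I_div hm0).eq_zero_of_aeval_eq_zero_of_mem_degreeLT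
      (by omega) hroot hdeg
  simpa [p, Nat.sub_ne_zero_of_lt, hrm, hsm, Nat.pos_iff_ne_zero.mp hr.1,
    Nat.pos_iff_ne_zero.mp hs.1] using congrArg (eval 0) hp0

theorem stmt9 (e d : ℕ) (he : 1 ≤ e) (hde : d < e)
    (r s : ℕ) (hr : 1 ≤ r ∧ r ≤ 2 ^ e - 1) (hs : 1 ≤ s ∧ s ≤ 2 ^ e - 1)
    (hrd : 2 ^ d ∣ r ∧ ¬ 2 ^ (d + 1) ∣ r)
    (hsd : 2 ^ d ∣ s ∧ ¬ 2 ^ (d + 1) ∣ s)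
    (q : ℚ)
    (hq : 2 * Real.cos (r * π / 2 ^ e) - 2 * Real.cos (s * π / 2 ^ e) = q) :
    q = 0 :=
  stmt9_general e r s hr hs q hq
end

section
/- Let p ≡ 1 (mod 8) be prime and α_r = 2cos(rπ/p) for r = 1, ..., p-1. Suppose integers a_1, ..., a_{p-1} and s satisfy Σ_{r=1}^{p-1} a_r α_r = s and Σ_{r=1}^{p-1} a_r = 0. Then Σ_{r even} a_r is even. -/
/-!
Put `ζ = exp (π i / p)`, a primitive `2p`-th root of unity. Then `α_r = ζ ^ r + ζ ^ (2p - r)`, so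
the hypothesis says `f(ζ) = s` for an integer polynomial `f` none of whose exponents is a multiple
of `p`. As `Φ_{2p}` is irreducible, `f(ζ ^ j) = s` for every `j` coprime to `2p`. Summing over these
`p - 1` odd residues, each monomial `X ^ m` contributes `-(-1) ^ m`, so `f(-1) = -(p - 1) s`, that is
`2 ∑ (-1) ^ r a_r = -(p - 1) s`. Together with `∑ a_r = 0` this gives
`4 ∑_{r even} a_r = -(p - 1) s`, and `8 ∣ p - 1`.
-/

open Real Finset Polynomial

theorem Nat.coprime_two_mul_add_one_two_mul {p k : ℕ} (hp : p.Prime) (hk : k < p)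
    (hkp : k ≠ p / 2) : (2 * k + 1).Coprime (2 * p) := by
  refine Nat.Coprime.mul_right (Nat.coprime_two_right.2 (odd_two_mul_add_one k)) ?_
  refine (Nat.coprime_comm.1 ((hp.coprime_iff_not_dvd).2 fun hdvd => hkp ?_))
  have := Nat.eq_of_dvd_of_lt_two_mul (by omega) hdvd (by omega)
  omega

section PrimitiveRoot

variable {K : Type*} [Field K] {ζ : K}

theorem IsPrimitiveRoot.aeval_pow_eq_zero_of_coprime_s13 [CharZero K] {n : ℕ}
    (hζ : IsPrimitiveRoot ζ n) (hn : 0 < n) {f : ℤ[X]} (hf : aeval ζ f = 0) {j : ℕ}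
    (hj : j.Coprime n) : aeval (ζ ^ j) f = 0 := by
  obtain ⟨g, rfl⟩ : minpoly ℤ (ζ ^ j) ∣ f := by
    rw [← cyclotomic_eq_minpoly (hζ.pow_of_coprime j hj) hn, cyclotomic_eq_minpoly hζ hn]
    exact minpoly.isIntegrallyClosed_dvd (hζ.isIntegral hn) hf
  rw [map_mul, minpoly.aeval, zero_mul]

theorem IsPrimitiveRoot.sum_erase_odd_pow_pow {p : ℕ} (hζ : IsPrimitiveRoot ζ (2 * p))
    (hp : Odd p) (hp1 : 1 < p) {m : ℕ} (hm : m.Coprime p) :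
    ∑ k ∈ (range p).erase (p / 2), (ζ ^ (2 * k + 1)) ^ m = -(-1) ^ m := by
  have hsq : IsPrimitiveRoot ((ζ ^ 2) ^ m) p := by
    have h := hζ.pow_of_dvd two_ne_zero (dvd_mul_right 2 p)
    rw [Nat.mul_div_cancel_left p two_pos] at h
    exact h.pow_of_coprime m hm
  have hhalf : ζ ^ p = -1 := by
    have h := hζ.pow_of_dvd (by omega) (dvd_mul_left p 2)
    rw [Nat.mul_div_cancel _ (by omega)] at h
    exact h.eq_neg_one_of_two_right
  have hfull : ∑ k ∈ range p, (ζ ^ (2 * k + 1)) ^ m = 0 := by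
    calc ∑ k ∈ range p, (ζ ^ (2 * k + 1)) ^ m
        = ζ ^ m * ∑ k ∈ range p, ((ζ ^ 2) ^ m) ^ k := by
          rw [mul_sum]; refine sum_congr rfl fun k _ => ?_; ring
      _ = 0 := by rw [hsq.geom_sum_eq_zero hp1, mul_zero]
  obtain ⟨c, rfl⟩ := hp
  rw [sum_erase_eq_sub (mem_range.2 (by omega)), hfull,
    show 2 * ((2 * c + 1) / 2) + 1 = 2 * c + 1 by omega, hhalf, zero_sub]

theorem IsPrimitiveRoot.eval_neg_one_eq_of_aeval_eq [CharZero K] {p : ℕ} (hp : p.Prime)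
    (hodd : Odd p) (hζ : IsPrimitiveRoot ζ (2 * p)) {f : ℤ[X]}
    (hf : ∀ n, p ∣ n → f.coeff n = 0) {s : ℤ} (hs : aeval ζ f = s) :
    f.eval (-1) = -((p - 1) * s) := by
  -- `2k + 1` for `k ∈ S` runs over the units modulo `2p`
  set S := (range p).erase (p / 2)
  have hconj : ∀ k ∈ S, aeval (ζ ^ (2 * k + 1)) f = s := by
    intro k hk
    rw [mem_erase, mem_range] at hk
    have h := hζ.aeval_pow_eq_zero_of_coprime_s13 (by have := hp.pos; omega) (f := f - C s)
      (by simp [hs]) (Nat.coprime_two_mul_add_one_two_mul hp hk.2 hk.1)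
    simpa [sub_eq_zero] using h
  have hterm (n : ℕ) :
      f.coeff n • ∑ k ∈ S, (ζ ^ (2 * k + 1)) ^ n = f.coeff n • -(-1 : K) ^ n := by
    by_cases hpn : p ∣ n
    · simp [hf n hpn]
    · rw [hζ.sum_erase_odd_pow_pow hodd hp.one_lt
        (Nat.coprime_comm.1 ((hp.coprime_iff_not_dvd).2 hpn))]
  have hcard : (S.card : K) = p - 1 := by
    rw [card_erase_of_mem (by simp [Nat.div_lt_self hp.pos]), card_range,
      Nat.cast_sub hp.one_le, Nat.cast_one]
  have key : ((p - 1) * s : K) = -((f.eval (-1) : ℤ) : K) :=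
    calc ((p - 1) * s : K) = ∑ k ∈ S, aeval (ζ ^ (2 * k + 1)) f := by
          rw [sum_congr rfl hconj, sum_const, nsmul_eq_mul, hcard]
      _ = ∑ n ∈ range (f.natDegree + 1), f.coeff n • ∑ k ∈ S, (ζ ^ (2 * k + 1)) ^ n := by
          simp_rw [aeval_eq_sum_range, smul_sum]
          exact sum_comm
      _ = -aeval (-1 : K) f := by
          rw [sum_congr rfl fun n _ => hterm n, aeval_eq_sum_range]
          simp only [smul_neg, sum_neg_distrib]
      _ = -((f.eval (-1) : ℤ) : K) := by
          rw [show (-1 : K) = algebraMap ℤ K (-1) by simp,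
            aeval_algebraMap_apply_eq_algebraMap_eval, algebraMap_int_eq, eq_intCast]
  exact_mod_cast (neg_eq_iff_eq_neg.1 key.symm)

end PrimitiveRoot

/-- At `ζ = exp (π i / p)` this evaluates to `∑ r, a r * 2 cos (r π / p)`. -/
noncomputable def cosSumPoly (p : ℕ) (a : ℕ → ℤ) : ℤ[X] :=
  ∑ r ∈ Icc 1 (p - 1), C (a r) * (X ^ r + X ^ (2 * p - r))

section cosSumPoly

variable (p : ℕ) (a : ℕ → ℤ)

theorem aeval_cosSumPoly {A : Type*} [CommRing A] (z : A) :
    aeval z (cosSumPoly p a) = ∑ r ∈ Icc 1 (p - 1), (a r : A) * (z ^ r + z ^ (2 * p - r)) := by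
  simp [cosSumPoly]

theorem coeff_cosSumPoly_of_dvd {n : ℕ} (hn : p ∣ n) : (cosSumPoly p a).coeff n = 0 := by
  simp only [cosSumPoly, finsetSum_coeff, coeff_C_mul, coeff_add, coeff_X_pow]
  refine sum_eq_zero fun r hr => ?_
  rw [mem_Icc] at hr
  have hrp : r < p := by omega
  obtain ⟨c, rfl⟩ := hn
  have hr₁ : p * c ≠ r := fun h => by
    rcases c with _ | c
    · omega
    · nlinarith
  have hr₂ : p * c ≠ 2 * p - r := fun h => by
    rcases c with _ | _ | c
    · omega
    · omega
    · have : p * (c + 1 + 1) + r = 2 * p := by omega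
      nlinarith
  simp [hr₁, hr₂]

theorem eval_neg_one_cosSumPoly :
    (cosSumPoly p a).eval (-1) = 2 * ∑ r ∈ Icc 1 (p - 1), (-1) ^ r * a r := by
  simp only [cosSumPoly, eval_finsetSum, eval_mul, eval_C, eval_add, eval_pow, eval_X, mul_sum]
  refine sum_congr rfl fun r hr => ?_
  rw [mem_Icc] at hr
  rw [neg_one_pow_eq_pow_mod_two (2 * p - r), show (2 * p - r) % 2 = r % 2 by omega,
    ← neg_one_pow_eq_pow_mod_two]
  ring

end cosSumPoly

theorem Complex.two_cos_eq_exp_pow_add_exp_pow {n r : ℕ} (hr : r ≤ n) :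
    2 * Complex.cos (2 * π * r / n) =
      Complex.exp (2 * π * Complex.I / n) ^ r +
        Complex.exp (2 * π * Complex.I / n) ^ (n - r) := by
  obtain rfl | hn := eq_or_ne n 0
  · obtain rfl : r = 0 := by omega
    norm_num
  set ζ := Complex.exp (2 * π * Complex.I / n)
  have hζr : ζ ^ r = Complex.exp (2 * π * r / n * Complex.I) := by
    rw [← Complex.exp_nat_mul]; ring_nf
  rw [pow_sub₀ ζ (Complex.exp_ne_zero _) hr, (Complex.isPrimitiveRoot_exp n hn).pow_eq_one,
    one_mul, hζr, ← Complex.exp_neg, Complex.two_cos, neg_mul]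

theorem aeval_exp_cosSumPoly (p : ℕ) (a : ℕ → ℤ) :
    aeval (Complex.exp (2 * π * Complex.I / (2 * p : ℕ))) (cosSumPoly p a) =
      ((∑ r ∈ Icc 1 (p - 1), (a r : ℝ) * (2 * Real.cos (r * π / p)) : ℝ) : ℂ) := by
  rw [aeval_cosSumPoly, Complex.ofReal_sum]
  refine sum_congr rfl fun r hr => ?_
  rw [mem_Icc] at hr
  rw [← Complex.two_cos_eq_exp_pow_add_exp_pow (by omega)]
  have : (p : ℂ) ≠ 0 := by norm_cast; omega
  push_cast
  congr 3
  field_simp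

theorem two_mul_sum_filter_even_eq {R : Type*} [CommRing R] (S : Finset ℕ) (a : ℕ → R)
    (h : ∑ r ∈ S, a r = 0) :
    2 * ∑ r ∈ S.filter (fun r => Even r), a r = ∑ r ∈ S, (-1) ^ r * a r := by
  rw [← sum_filter_add_sum_filter_not S (fun r => Even r)] at h ⊢
  have heven : ∑ r ∈ S.filter (fun r => Even r), (-1) ^ r * a r =
      ∑ r ∈ S.filter (fun r => Even r), a r :=
    sum_congr rfl fun r hr => by rw [(mem_filter.1 hr).2.neg_one_pow, one_mul]
  have hodd : ∑ r ∈ S.filter (fun r => ¬Even r), (-1) ^ r * a r =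
      -∑ r ∈ S.filter (fun r => ¬Even r), a r := by
    rw [← sum_neg_distrib]
    exact sum_congr rfl fun r hr => by
      rw [(Nat.not_even_iff_odd.1 (mem_filter.1 hr).2).neg_one_pow, neg_one_mul]
  rw [heven, hodd]
  linear_combination h

theorem stmt13 (p : ℕ) (hp : p.Prime) (hp8 : p % 8 = 1) (a : ℕ → ℤ) (s : ℤ)
    (h1 : ∑ r ∈ Finset.Icc 1 (p - 1),
        (a r : ℝ) * (2 * Real.cos (r * π / p)) = s)
    (h2 : ∑ r ∈ Finset.Icc 1 (p - 1), a r = 0) :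
    Even (∑ r ∈ (Finset.Icc 1 (p - 1)).filter (fun r => Even r), a r) := by
  have hζ := Complex.isPrimitiveRoot_exp (2 * p) (by omega)
  have hs : aeval (Complex.exp (2 * π * Complex.I / (2 * p : ℕ))) (cosSumPoly p a) = s := by
    rw [aeval_exp_cosSumPoly, h1, Complex.ofReal_intCast]
  have key := hζ.eval_neg_one_eq_of_aeval_eq hp (hp.odd_of_ne_two (by omega))
    (fun n hn => coeff_cosSumPoly_of_dvd p a hn) hs
  rw [eval_neg_one_cosSumPoly, ← two_mul_sum_filter_even_eq _ _ h2] at key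
  obtain ⟨k, hk⟩ : ∃ k : ℤ, (p : ℤ) - 1 = 8 * k := ⟨p / 8, by omega⟩
  rw [hk] at key
  exact ⟨-(k * s), by linarith⟩
end

section
/- Let p ≡ 1 (mod 4) be prime and β_r = 2cos(rπ/(2p)) for r = 1, ..., 2p-1. Suppose integers a_1, ..., a_{2p-1} and s satisfy Σ_{r=1}^{2p-1} a_r β_r = s. Then Σ_{r even} a_r is even. -/
/-!
Put `ζ = exp (π i / (2p))`, a primitive `4p`-th root of unity. Since `ζ ^ (2p) = -1`,
`β_r = ζ ^ r - ζ ^ (2p - r)`, so the hypothesis says that `ζ` is a root of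
`P = ∑ (a_r - a_{2p-r}) X ^ r - s`. The minimal polynomial of `ζ` over `ℤ` is
`Φ_{4p} = ∑_{j<p} (-X²) ^ j`, of degree `2p - 2`, hence `P = Φ_{4p} (cX + d)` with `d = -s`.
As `Φ_{4p}` is even, the even coefficients give `a_{2j} - a_{2p-2j} = (-1) ^ (j+1) s`.
Pairing `j` with `p - j`, the sum of the even-indexed `a_r` is `≡ (p-1)/2 · s ≡ 0 (mod 2)`.
-/

open Real Finset Polynomial

section Sums

variable {M : Type*} [AddCommMonoid M]

theorem sum_Icc_two_mul_eq_sum_add_reflect (f : ℕ → M) (m : ℕ) :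
    ∑ j ∈ Icc 1 (2 * m), f j = ∑ j ∈ Icc 1 m, (f j + f (2 * m + 1 - j)) := by
  have hsplit : Icc 1 (2 * m) = Icc 1 m ∪ Icc (m + 1) (2 * m) := by
    ext j; simp only [mem_union, mem_Icc]; omega
  have hreflect : ∑ j ∈ Icc (m + 1) (2 * m), f j = ∑ j ∈ Icc 1 m, f (2 * m + 1 - j) := by
    refine sum_nbij' (fun j => 2 * m + 1 - j) (fun j => 2 * m + 1 - j) ?_ ?_ ?_ ?_ ?_ <;>
      intro j hj <;> simp only [mem_Icc] at hj ⊢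
    all_goals first | omega | congr 1; omega
  have hdisj : Disjoint (Icc 1 m) (Icc (m + 1) (2 * m)) :=
    disjoint_left.2 fun j h₁ h₂ => by simp only [mem_Icc] at h₁ h₂; omega
  rw [hsplit, sum_union hdisj, hreflect, sum_add_distrib]

theorem sum_filter_even_Icc (f : ℕ → M) (k : ℕ) :
    ∑ r ∈ (Icc 1 k).filter Even, f r = ∑ j ∈ Icc 1 (k / 2), f (2 * j) := by
  symm
  refine sum_nbij' (2 * ·) (· / 2) ?_ ?_ ?_ ?_ ?_ <;>
    intro j hj <;> simp only [mem_filter, mem_Icc, Nat.even_iff] at hj ⊢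
  all_goals omega

end Sums

theorem even_sum_Icc_of_add_reflect_eq (b : ℕ → ℤ) (s : ℤ) {m : ℕ} (hm : Even m)
    (h : ∀ j ∈ Icc 1 m, ((b j + b (2 * m + 1 - j) : ℤ) : ZMod 2) = s) :
    Even (∑ j ∈ Icc 1 (2 * m), b j) := by
  rw [← ZMod.intCast_eq_zero_iff_even, sum_Icc_two_mul_eq_sum_add_reflect, Int.cast_sum,
    sum_congr rfl h, sum_const, Nat.card_Icc, add_tsub_cancel_right, nsmul_eq_mul,
    (ZMod.natCast_eq_zero_iff_even).2 hm, zero_mul]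

namespace Polynomial

theorem coeff_two_mul_mul_coeff_zero_of_dvd {R : Type*} [CommRing R] [IsDomain R] {f g : R[X]}
    (hfg : f ∣ g) (hdeg : g.natDegree ≤ f.natDegree + 1) (hodd : ∀ k, Odd k → f.coeff k = 0)
    (j : ℕ) : g.coeff (2 * j) * f.coeff 0 = f.coeff (2 * j) * g.coeff 0 := by
  obtain ⟨q, rfl⟩ := hfg
  rcases eq_or_ne f 0 with rfl | hf
  · simp
  rcases eq_or_ne q 0 with rfl | hq
  · simp
  have hq1 : q.natDegree ≤ 1 := by rw [natDegree_mul hf hq] at hdeg; omega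
  rw [eq_X_add_C_of_natDegree_le_one hq1]
  cases j with
  | zero => ring
  | succ i =>
    simp only [mul_add, coeff_add, ← mul_assoc, show 2 * (i + 1) = 2 * i + 1 + 1 by ring,
      coeff_mul_X, coeff_mul_C, mul_coeff_zero, coeff_C_zero, coeff_X_zero,
      hodd (2 * i + 1) (odd_two_mul_add_one i)]
    ring

end Polynomial

noncomputable def negXSqGeomSum (n : ℕ) : ℤ[X] := ∑ j ∈ range n, (-X ^ 2) ^ j

theorem coeff_negXSqGeomSum (n k : ℕ) :
    (negXSqGeomSum n).coeff k = if Even k ∧ k / 2 < n then (-1) ^ (k / 2) else 0 := by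
  have hterm : ∀ j, ((-X ^ 2) ^ j : ℤ[X]) = C ((-1) ^ j) * X ^ (2 * j) := by
    intro j; rw [neg_pow, pow_mul]; simp
  simp only [negXSqGeomSum, finsetSum_coeff, hterm, coeff_C_mul_X_pow]
  split_ifs with hk
  · rw [sum_eq_single (k / 2)]
    · rw [if_pos (by rcases hk.1 with ⟨i, rfl⟩; omega)]
    · intro j _ hj; rw [if_neg (by omega)]
    · intro h; exact absurd (mem_range.2 hk.2) h
  · refine sum_eq_zero fun j hj => if_neg ?_
    rw [mem_range] at hj
    rintro rfl
    exact hk ⟨even_two_mul j, by omega⟩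

theorem natDegree_negXSqGeomSum_le (n : ℕ) : (negXSqGeomSum n).natDegree ≤ 2 * (n - 1) :=
  natDegree_le_iff_coeff_eq_zero.2 fun k hk => by
    rw [coeff_negXSqGeomSum, if_neg (by rintro ⟨⟨i, rfl⟩, _⟩; omega)]

theorem coeff_negXSqGeomSum_two_mul {n j : ℕ} (hj : j < n) :
    (negXSqGeomSum n).coeff (2 * j) = (-1) ^ j := by
  rw [coeff_negXSqGeomSum, if_pos ⟨even_two_mul j, by omega⟩, Nat.mul_div_cancel_left _ two_pos]

theorem coeff_negXSqGeomSum_of_odd {n k : ℕ} (hk : Odd k) : (negXSqGeomSum n).coeff k = 0 := by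
  rw [coeff_negXSqGeomSum, if_neg fun h => Nat.not_even_iff_odd.2 hk h.1]

theorem coeff_negXSqGeomSum_top {n : ℕ} (hn : Odd n) :
    (negXSqGeomSum n).coeff (2 * (n - 1)) = 1 := by
  obtain ⟨i, rfl⟩ := hn
  rw [coeff_negXSqGeomSum_two_mul (by omega), Nat.add_sub_cancel,
    Even.neg_one_pow (even_two_mul i)]

theorem monic_negXSqGeomSum {n : ℕ} (hn : Odd n) : (negXSqGeomSum n).Monic :=
  monic_of_natDegree_le_of_coeff_eq_one _ (natDegree_negXSqGeomSum_le n)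
    (coeff_negXSqGeomSum_top hn)

theorem natDegree_negXSqGeomSum {n : ℕ} (hn : Odd n) :
    (negXSqGeomSum n).natDegree = 2 * (n - 1) :=
  natDegree_eq_of_le_of_coeff_ne_zero (natDegree_negXSqGeomSum_le n)
    (by rw [coeff_negXSqGeomSum_top hn]; exact one_ne_zero)

theorem IsPrimitiveRoot.minpoly_int_eq_of_monic {K : Type*} [CommRing K] [IsDomain K]
    [CharZero K] {μ : K} {n : ℕ} (hμ : IsPrimitiveRoot μ n) (hn : 0 < n) {f : ℤ[X]}
    (hf : f.Monic) (hfμ : aeval μ f = 0) (hdeg : f.natDegree ≤ n.totient) :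
    minpoly ℤ μ = f :=
  (eq_of_monic_of_dvd_of_natDegree_le (minpoly.monic (hμ.isIntegral hn)) hf
    (minpoly.isIntegrallyClosed_dvd (hμ.isIntegral hn) hfμ)
    (hdeg.trans hμ.totient_le_degree_minpoly)).symm

theorem IsPrimitiveRoot.aeval_negXSqGeomSum {K : Type*} [Field K] {ζ : K} {n : ℕ}
    (hζ : IsPrimitiveRoot ζ (4 * n)) (hn : Odd n) (hn1 : 1 < n) :
    aeval ζ (negXSqGeomSum n) = 0 := by
  have hhalf : ζ ^ (2 * n) = -1 :=
    (hζ.pow (by omega) (by ring : 4 * n = 2 * n * 2)).eq_neg_one_of_two_right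
  have hroot : (-ζ ^ 2) ^ n = 1 := by
    rw [neg_pow, ← pow_mul, hhalf, hn.neg_one_pow]; ring
  have hne : -ζ ^ 2 ≠ 1 := by
    intro h
    have h4 : ζ ^ 4 = 1 := by rw [show 4 = 2 * 2 by rfl, pow_mul, ← neg_sq, h, one_pow]
    have := Nat.le_of_dvd (by norm_num) (hζ.dvd_of_pow_eq_one 4 h4)
    omega
  simp only [negXSqGeomSum, map_sum, map_pow, map_neg, aeval_X]
  rw [geom_sum_eq hne, hroot, sub_self, zero_div]

theorem IsPrimitiveRoot.minpoly_eq_negXSqGeomSum {K : Type*} [Field K] [CharZero K] {ζ : K}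
    {p : ℕ} (hp : p.Prime) (hodd : Odd p) (hζ : IsPrimitiveRoot ζ (4 * p)) :
    minpoly ℤ ζ = negXSqGeomSum p := by
  have htot : (4 * p).totient = 2 * (p - 1) := by
    rw [Nat.totient_mul (Nat.Coprime.pow_left 2 hodd.coprime_two_left), Nat.totient_prime hp]
    rfl
  exact hζ.minpoly_int_eq_of_monic (by have := hp.pos; omega) (monic_negXSqGeomSum hodd)
    (hζ.aeval_negXSqGeomSum hodd hp.one_lt) (by rw [natDegree_negXSqGeomSum hodd, htot])

theorem Complex.isPrimitiveRoot_exp_pi_mul_I_div_s14 (n : ℕ) (hn : n ≠ 0) :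
    IsPrimitiveRoot (Complex.exp (π * Complex.I / n)) (2 * n) := by
  convert Complex.isPrimitiveRoot_exp (2 * n) (by omega) using 2
  push_cast
  field_simp

theorem Complex.exp_pi_mul_I_div_pow (n k : ℕ) :
    Complex.exp (π * Complex.I / n) ^ k = Complex.exp (k * π / n * Complex.I) := by
  rw [← Complex.exp_nat_mul]; ring_nf

theorem Complex.two_cos_eq_exp_pow_sub_exp_pow {n r : ℕ} (hn : n ≠ 0) (hr : r ≤ n) :
    ((2 * Real.cos (r * π / n) : ℝ) : ℂ) =
      Complex.exp (π * Complex.I / n) ^ r - Complex.exp (π * Complex.I / n) ^ (n - r) := by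
  have hflip : Complex.exp (π * Complex.I / n) ^ (n - r) =
      -Complex.exp (-(r * π / n) * Complex.I) := by
    have hn' : (n : ℂ) ≠ 0 := Nat.cast_ne_zero.2 hn
    rw [Complex.exp_pi_mul_I_div_pow, Nat.cast_sub hr,
      show ((n : ℂ) - r) * π / n * Complex.I = π * Complex.I + -(r * π / n) * Complex.I by
        field_simp; ring,
      Complex.exp_add, Complex.exp_pi_mul_I, neg_one_mul]
  rw [hflip, Complex.exp_pi_mul_I_div_pow]
  push_cast
  rw [Complex.two_cos]
  ring

noncomputable def antisymmPoly (a : ℕ → ℤ) (n : ℕ) : ℤ[X] :=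
  ∑ r ∈ Icc 1 (n - 1), C (a r - a (n - r)) * X ^ r

theorem coeff_antisymmPoly (a : ℕ → ℤ) (n k : ℕ) :
    (antisymmPoly a n).coeff k = if k ∈ Icc 1 (n - 1) then a k - a (n - k) else 0 := by
  simp only [antisymmPoly, finsetSum_coeff, coeff_C_mul_X_pow, sum_ite_eq]

theorem coeff_antisymmPoly_zero (a : ℕ → ℤ) (n : ℕ) : (antisymmPoly a n).coeff 0 = 0 := by
  rw [coeff_antisymmPoly, if_neg (by simp)]

theorem natDegree_antisymmPoly_le (a : ℕ → ℤ) (n : ℕ) :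
    (antisymmPoly a n).natDegree ≤ n - 1 :=
  natDegree_le_iff_coeff_eq_zero.2 fun k hk => by
    rw [coeff_antisymmPoly, if_neg (by rw [mem_Icc]; omega)]

theorem aeval_antisymmPoly {A : Type*} [CommRing A] (x : A) (a : ℕ → ℤ) (n : ℕ) :
    aeval x (antisymmPoly a n) = ∑ r ∈ Icc 1 (n - 1), (a r : A) * (x ^ r - x ^ (n - r)) := by
  have hreflect : ∑ r ∈ Icc 1 (n - 1), (a (n - r) : A) * x ^ r =
      ∑ r ∈ Icc 1 (n - 1), (a r : A) * x ^ (n - r) := by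
    refine sum_nbij' (n - ·) (n - ·) ?_ ?_ ?_ ?_ ?_ <;>
      intro r hr <;> simp only [mem_Icc] at hr ⊢
    all_goals first | omega | rw [Nat.sub_sub_self (by omega)]
  simp only [antisymmPoly, map_sum, map_mul, aeval_C, map_pow, aeval_X, algebraMap_int_eq,
    Int.coe_castRingHom, Int.cast_sub, sub_mul, sum_sub_distrib, hreflect, mul_sub]

theorem aeval_exp_antisymmPoly (a : ℕ → ℤ) {n : ℕ} (hn : n ≠ 0) :
    aeval (Complex.exp (π * Complex.I / n)) (antisymmPoly a n) =
      ((∑ r ∈ Icc 1 (n - 1), (a r : ℝ) * (2 * Real.cos (r * π / n)) : ℝ) : ℂ) := by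
  rw [aeval_antisymmPoly, Complex.ofReal_sum]
  refine sum_congr rfl fun r hr => ?_
  rw [mem_Icc] at hr
  rw [Complex.ofReal_mul, Complex.two_cos_eq_exp_pow_sub_exp_pow hn (by omega)]
  norm_cast

theorem sub_reflect_eq_of_negXSqGeomSum_dvd {a : ℕ → ℤ} {s : ℤ} {p : ℕ} (hodd : Odd p)
    (hdvd : negXSqGeomSum p ∣ antisymmPoly a (2 * p) - C s) {j : ℕ} (hj : j ∈ Icc 1 (p - 1)) :
    a (2 * j) - a (2 * p - 2 * j) = (-1) ^ j * -s := by
  rw [mem_Icc] at hj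
  have hdeg : (antisymmPoly a (2 * p) - C s).natDegree ≤ (negXSqGeomSum p).natDegree + 1 := by
    refine (natDegree_sub_le _ _).trans (max_le ?_ (by simp))
    rw [natDegree_negXSqGeomSum hodd]
    exact (natDegree_antisymmPoly_le a _).trans (by omega)
  have hcoeff0 : (antisymmPoly a (2 * p) - C s).coeff 0 = -s := by
    rw [coeff_sub, coeff_antisymmPoly_zero, coeff_C_zero, zero_sub]
  have hcoeff2j :
      (antisymmPoly a (2 * p) - C s).coeff (2 * j) = a (2 * j) - a (2 * p - 2 * j) := by
    rw [coeff_sub, coeff_antisymmPoly, if_pos (by rw [mem_Icc]; omega), coeff_C,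
      if_neg (by omega), sub_zero]
  have hΦ0 : (negXSqGeomSum p).coeff 0 = 1 := coeff_negXSqGeomSum_two_mul (j := 0) (by omega)
  have := coeff_two_mul_mul_coeff_zero_of_dvd hdvd hdeg (fun _ => coeff_negXSqGeomSum_of_odd) j
  rwa [hcoeff0, hcoeff2j, hΦ0, coeff_negXSqGeomSum_two_mul (by omega), mul_one] at this

theorem even_sum_filter_even_of_sub_reflect_eq {p : ℕ} (hp4 : p % 4 = 1) (a : ℕ → ℤ)
    (s : ℤ) (h : ∀ j ∈ Icc 1 (p - 1), a (2 * j) - a (2 * p - 2 * j) = (-1) ^ j * -s) :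
    Even (∑ r ∈ (Icc 1 (2 * p - 1)).filter Even, a r) := by
  rw [sum_filter_even_Icc, show (2 * p - 1) / 2 = 2 * ((p - 1) / 2) by omega]
  refine even_sum_Icc_of_add_reflect_eq (fun j => a (2 * j)) s ⟨(p - 1) / 4, by omega⟩
    fun j hj => ?_
  rw [mem_Icc] at hj
  rw [show 2 * (2 * ((p - 1) / 2) + 1 - j) = 2 * p - 2 * j by omega, Int.cast_add,
    ← ZMod.neg_eq_self_mod_two ((a (2 * p - 2 * j) : ℤ) : ZMod 2), ← sub_eq_add_neg,
    ← Int.cast_sub, h j (by rw [mem_Icc]; omega)]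
  simp [ZMod.neg_eq_self_mod_two]

theorem stmt14 (p : ℕ) (hp : p.Prime) (hp4 : p % 4 = 1) (a : ℕ → ℤ) (s : ℤ)
    (h : ∑ r ∈ Finset.Icc 1 (2 * p - 1),
        (a r : ℝ) * (2 * Real.cos (r * π / (2 * p))) = s) :
    Even (∑ r ∈ (Finset.Icc 1 (2 * p - 1)).filter (fun r => Even r), a r) := by
  have hodd : Odd p := Nat.odd_iff.2 (by omega)
  set ζ := Complex.exp (π * Complex.I / (2 * p : ℕ))
  have hζ : IsPrimitiveRoot ζ (4 * p) := by
    have := Complex.isPrimitiveRoot_exp_pi_mul_I_div_s14 (2 * p) (by omega)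
    rwa [← mul_assoc] at this
  have hroot : aeval ζ (antisymmPoly a (2 * p) - C s) = 0 := by
    have h' : ∑ r ∈ Icc 1 (2 * p - 1), (a r : ℝ) * (2 * cos (r * π / (2 * p : ℕ)))
        = s := by
      push_cast; exact h
    rw [map_sub, aeval_exp_antisymmPoly a (by omega), h', aeval_C]
    simp
  have hdvd : negXSqGeomSum p ∣ antisymmPoly a (2 * p) - C s :=
    hζ.minpoly_eq_negXSqGeomSum hp hodd ▸
      minpoly.isIntegrallyClosed_dvd (hζ.isIntegral (by omega)) hroot
  exact even_sum_filter_even_of_sub_reflect_eq hp4 a s fun j hj =>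
    sub_reflect_eq_of_negXSqGeomSum_dvd hodd hdvd hj
end

section
/- Let Y and Z be finite simple graphs with adjacency spectral projectors. Let y_1, y_2 be vertices of Y, E a spectral projector of Y, z a vertex of Z, and F a spectral projector of Z with F e_z ≠ 0. If W is a spectral projector of the cartesian product Y □ Z with (E ⊗ F)W ≠ 0 and W e_{(y_1,z)} = α W e_{(y_2,z)} for some scalar α, then E e_{y_1} = α E e_{y_2}. -/
open Matrix

/-- `W` is the (orthogonal) spectral projector of the symmetric matrix `A`
onto the eigenspace of the eigenvalue `θ`: it is a symmetric idempotent whose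
image lies in the `θ`-eigenspace and which fixes every `θ`-eigenvector. -/
def IsSpectralProjector {V : Type*} [Fintype V] [DecidableEq V]
    (A W : Matrix V V ℝ) (θ : ℝ) : Prop :=
  W * W = W ∧ W.IsSymm ∧ A * W = θ • W ∧
    ∀ v : V → ℝ, A.mulVec v = θ • v → W.mulVec v = v

/-! Since `Y □ Z` has adjacency matrix `A_Y ⊗ 1 + 1 ⊗ A_Z`, the
symmetric matrix `E ⊗ F` has its columns in the `(θ + μ)`-eigenspace of `Y □ Z`. As
`(E ⊗ F) W ≠ 0`, the eigenvalue `ν` of `W` must be `θ + μ`, so `W` fixes these columns and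
`(E ⊗ F) W = E ⊗ F`. Applying `E ⊗ F` to `W e_{(y₁,z)} = α W e_{(y₂,z)}` gives
`E e_{y₁} ⊗ F e_z = α E e_{y₂} ⊗ F e_z`, and `F e_z ≠ 0` can be cancelled. -/

open scoped Kronecker

namespace Matrix

variable {m n R : Type*}

/-- For adjacency matrices, the adjacency matrix of the cartesian product. -/
def kroneckerSum [DecidableEq m] [DecidableEq n] [NonAssocSemiring R]
    (A : Matrix m m R) (B : Matrix n n R) : Matrix (m × n) (m × n) R :=
  A ⊗ₖ 1 + 1 ⊗ₖ B

theorem IsSymm.kronecker [Mul R] {A : Matrix m m R} {B : Matrix n n R}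
    (hA : A.IsSymm) (hB : B.IsSymm) : (A ⊗ₖ B).IsSymm := by
  rw [IsSymm, ← kroneckerMap_transpose, hA.eq, hB.eq]

theorem IsSymm.kroneckerSum [DecidableEq m] [DecidableEq n] [NonAssocSemiring R]
    {A : Matrix m m R} {B : Matrix n n R} (hA : A.IsSymm) (hB : B.IsSymm) :
    (kroneckerSum A B).IsSymm :=
  (hA.kronecker isSymm_one).add (isSymm_one.kronecker hB)

theorem kroneckerSum_mul_kronecker [Fintype m] [Fintype n] [DecidableEq m] [DecidableEq n]
    [CommSemiring R] {A E : Matrix m m R} {B F : Matrix n n R} {θ μ : R}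
    (hE : A * E = θ • E) (hF : B * F = μ • F) :
    kroneckerSum A B * (E ⊗ₖ F) = (θ + μ) • (E ⊗ₖ F) := by
  rw [kroneckerSum, add_mul, ← mul_kronecker_mul, ← mul_kronecker_mul, hE, hF, Matrix.one_mul,
    Matrix.one_mul, smul_kronecker, kronecker_smul, add_smul]

theorem mul_eq_smul_of_isSymm [Fintype n] [CommSemiring R] {A P : Matrix n n R} {c : R}
    (hA : A.IsSymm) (hP : P.IsSymm) (h : A * P = c • P) : P * A = c • P := by
  simpa only [transpose_mul, hA.eq, hP.eq, transpose_smul] using congrArg transpose h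

theorem kronecker_mulVec_single_one [Fintype m] [Fintype n] [DecidableEq m] [DecidableEq n]
    [NonAssocSemiring R] (E : Matrix m m R) (F : Matrix n n R) (y : m) (z : n) :
    (E ⊗ₖ F) *ᵥ Pi.single (y, z) 1 = fun p => E p.1 y * F p.2 z := by
  ext p
  simp only [mulVec_single_one, col_apply]
  rfl

theorem mulVec_single_eq_smul_of_kronecker [Fintype m] [Fintype n] [DecidableEq m]
    [DecidableEq n] [CommRing R] [NoZeroDivisors R] {E : Matrix m m R} {F : Matrix n n R}
    {y₁ y₂ : m} {z : n} {α : R} (hFz : F *ᵥ Pi.single z 1 ≠ 0)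
    (h : (E ⊗ₖ F) *ᵥ Pi.single (y₁, z) 1 = α • (E ⊗ₖ F) *ᵥ Pi.single (y₂, z) 1) :
    E *ᵥ Pi.single y₁ 1 = α • E *ᵥ Pi.single y₂ 1 := by
  obtain ⟨w, hw⟩ : ∃ w, F w z ≠ 0 := by
    by_contra! hF
    exact hFz (funext fun w => by simp [hF w])
  ext u
  have huw := congrFun h (u, w)
  simp only [kronecker_mulVec_single_one, Pi.smul_apply, smul_eq_mul] at huw
  simp only [mulVec_single_one, col_apply, Pi.smul_apply, smul_eq_mul]
  exact mul_right_cancel₀ hw (by rw [huw, mul_assoc])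

end Matrix

namespace IsSpectralProjector

variable {V : Type*} [Fintype V] [DecidableEq V] {A W P : Matrix V V ℝ} {ν c : ℝ}

theorem eq_of_mul_eq_smul (hW : IsSpectralProjector A W ν) (hPA : P * A = c • P)
    (hPW : P * W ≠ 0) : ν = c := by
  obtain ⟨-, -, hAW, -⟩ := hW
  have h : (ν - c) • (P * W) = 0 := by
    rw [sub_smul, ← Matrix.mul_smul, ← hAW, ← Matrix.smul_mul, ← hPA, Matrix.mul_assoc,
      sub_self]
  exact sub_eq_zero.mp ((smul_eq_zero.mp h).resolve_right hPW)

theorem mul_eq_self_of_mul_eq_smul (hW : IsSpectralProjector A W ν) (hAP : A * P = ν • P) :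
    W * P = P := by
  ext i j
  have hcol : A *ᵥ (P *ᵥ Pi.single j 1) = ν • P *ᵥ Pi.single j 1 := by
    rw [mulVec_mulVec, hAP, smul_mulVec]
  obtain ⟨-, -, -, hfixes⟩ := hW
  have hfix := hfixes _ hcol
  rw [mulVec_mulVec] at hfix
  simpa using congrFun hfix i

theorem mul_eq_self_of_isSymm (hW : IsSpectralProjector A W ν) (hA : A.IsSymm)
    (hP : P.IsSymm) (hAP : A * P = c • P) (hPW : P * W ≠ 0) : P * W = P := by
  obtain rfl := hW.eq_of_mul_eq_smul (mul_eq_smul_of_isSymm hA hP hAP) hPW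
  simpa only [transpose_mul, hW.2.1.eq, hP.eq] using
    congrArg transpose (hW.mul_eq_self_of_mul_eq_smul hAP)

end IsSpectralProjector

theorem stmt15 {VY VZ : Type*} [Fintype VY] [DecidableEq VY]
    [Fintype VZ] [DecidableEq VZ]
    (Y : SimpleGraph VY) (Z : SimpleGraph VZ)
    [DecidableRel Y.Adj] [DecidableRel Z.Adj]
    (y₁ y₂ : VY) (z : VZ)
    (θ μ ν : ℝ) (E : Matrix VY VY ℝ) (F : Matrix VZ VZ ℝ)
    (hE : IsSpectralProjector (Y.adjMatrix ℝ) E θ)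
    (hF : IsSpectralProjector (Z.adjMatrix ℝ) F μ)
    (hFz : F.mulVec (Pi.single z 1) ≠ 0)
    (W : Matrix (VY × VZ) (VY × VZ) ℝ)
    (hW : IsSpectralProjector
      (Matrix.kroneckerMap (· * ·) (Y.adjMatrix ℝ) (1 : Matrix VZ VZ ℝ) +
        Matrix.kroneckerMap (· * ·) (1 : Matrix VY VY ℝ) (Z.adjMatrix ℝ)) W ν)
    (hEF : Matrix.kroneckerMap (· * ·) E F * W ≠ 0)
    (α : ℝ)
    (hWv : W.mulVec (Pi.single (y₁, z) 1) = α • W.mulVec (Pi.single (y₂, z) 1)) :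
    E.mulVec (Pi.single y₁ 1) = α • E.mulVec (Pi.single y₂ 1) := by
  obtain ⟨-, hEs, hAE, -⟩ := hE
  obtain ⟨-, hFs, hAF, -⟩ := hF
  have hPW : (E ⊗ₖ F) * W = E ⊗ₖ F :=
    hW.mul_eq_self_of_isSymm (Y.isSymm_adjMatrix.kroneckerSum Z.isSymm_adjMatrix)
      (hEs.kronecker hFs) (kroneckerSum_mul_kronecker hAE hAF) hEF
  refine mulVec_single_eq_smul_of_kronecker hFz ?_
  rw [← hPW, ← mulVec_mulVec, ← mulVec_mulVec, hWv, mulVec_smul]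
end
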